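/- Let R be an algebraic curvature tensor on ℝⁿ (n ≥ 4) all of whose sectional curvatures lie in the interval (1, 4]. Then R has positive isotropic curvature, i.e. for every orthonormal four-frame {e₁,e₂,e₃,e₄}, R₁₃₁₃ + R₁₄₁₄ + R₂₃₂₃ + R₂₄₂₄ - 2R₁₂₃₄ > 0. -/

import Mathlib

/-!
Polarizing the pinching hypothesis: for an orthonormal four-frame, `R₀₁₂₃ + R₀₃₂₁` is a signed
combination of sectional curvatures of the planes spanned by `e₀ ± e₂` and `e₁ ± e₃`, so it is
bounded in absolute value by `b - a`. Doing the same with `e₂` and `e₃` exchanged and using the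
Bianchi identity gives Berger's estimate `R₀₁₂₃ < (2/3)(b - a)`. The four sectional curvatures in
the isotropic curvature exceed `a`, so it is positive as soon as `b ≤ 4a`.
-/

open RealInnerProductSpace

section CurvatureTensor

variable {E : Type*} [NormedAddCommGroup E] [InnerProductSpace ℝ E]

structure IsAlgebraicCurvatureTensor (R : E →ₗ[ℝ] E →ₗ[ℝ] E →ₗ[ℝ] E →ₗ[ℝ] ℝ) : Prop where
  antisymm : ∀ x y z w, R x y z w = - R y x z w
  pair_symm : ∀ x y z w, R x y z w = R z w x y
  bianchi : ∀ x y z w, R x y z w + R y z x w + R z x y w = 0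

def IsSectionallyPinched (R : E →ₗ[ℝ] E →ₗ[ℝ] E →ₗ[ℝ] E →ₗ[ℝ] ℝ) (a b : ℝ) : Prop :=
  ∀ x y : E, ⟪x, x⟫ = 1 → ⟪y, y⟫ = 1 → ⟪x, y⟫ = 0 → a < R x y x y ∧ R x y x y ≤ b

/-- The isotropic curvature of the complex two-plane spanned by `e₀ + i e₁` and `e₂ + i e₃`. -/
def isotropicCurvature (R : E →ₗ[ℝ] E →ₗ[ℝ] E →ₗ[ℝ] E →ₗ[ℝ] ℝ) (e : Fin 4 → E) : ℝ :=
  R (e 0) (e 2) (e 0) (e 2) + R (e 0) (e 3) (e 0) (e 3)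
    + R (e 1) (e 2) (e 1) (e 2) + R (e 1) (e 3) (e 1) (e 3)
    - 2 * R (e 0) (e 1) (e 2) (e 3)

variable {R : E →ₗ[ℝ] E →ₗ[ℝ] E →ₗ[ℝ] E →ₗ[ℝ] ℝ} {a b : ℝ}

-- `map_sub` does not apply here: instance search fails to find the `AddCommGroup` structure on
-- the thrice nested space of linear maps.
theorem LinearMap.map_sub₄ (R : E →ₗ[ℝ] E →ₗ[ℝ] E →ₗ[ℝ] E →ₗ[ℝ] ℝ) (x z y u v : E) :
    R (x - z) y u v = R x y u v - R z y u v := by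
  rw [sub_eq_add_neg, ← neg_one_smul ℝ z, map_add, map_smul]
  simp only [LinearMap.add_apply, LinearMap.smul_apply, smul_eq_mul]
  ring

theorem polarization_identity (hpair : ∀ x y z w, R x y z w = R z w x y) (x y z w : E) :
    R (x + z) (y + w) (x + z) (y + w) + R (x - z) (y - w) (x - z) (y - w)
      - R (x + z) (y - w) (x + z) (y - w) - R (x - z) (y + w) (x - z) (y + w)
      = 8 * (R x y z w + R x w z y) := by
  simp only [LinearMap.map_sub₄, map_add, map_sub, LinearMap.add_apply, LinearMap.sub_apply]
  linarith [hpair z w x y, hpair z y x w]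

theorem IsAlgebraicCurvatureTensor.antisymm_right (hR : IsAlgebraicCurvatureTensor R)
    (x y z w : E) : R x y z w = - R x y w z := by
  rw [hR.pair_symm x y z w, hR.pair_symm x y w z, hR.antisymm]

namespace IsSectionallyPinched

theorem bounds_of_inner (h : IsSectionallyPinched R a b) {u v : E} {s t : ℝ}
    (hs : 0 < s) (ht : 0 < t) (hu : ⟪u, u⟫ = s) (hv : ⟪v, v⟫ = t) (huv : ⟪u, v⟫ = 0) :
    s * t * a < R u v u v ∧ R u v u v ≤ s * t * b := by
  set c := (√s)⁻¹
  set d := (√t)⁻¹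
  have hc : c * c = s⁻¹ := by rw [← mul_inv, Real.mul_self_sqrt hs.le]
  have hd : d * d = t⁻¹ := by rw [← mul_inv, Real.mul_self_sqrt ht.le]
  have key := h (c • u) (d • v)
    (by rw [real_inner_smul_left, real_inner_smul_right, hu, ← mul_assoc, hc, inv_mul_cancel₀ hs.ne'])
    (by rw [real_inner_smul_left, real_inner_smul_right, hv, ← mul_assoc, hd, inv_mul_cancel₀ ht.ne'])
    (by rw [real_inner_smul_left, real_inner_smul_right, huv, mul_zero, mul_zero])
  have hscale : R (c • u) (d • v) (c • u) (d • v) = (s * t)⁻¹ * R u v u v := by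
    simp only [map_smul, LinearMap.smul_apply, smul_eq_mul]
    rw [mul_inv, ← hc, ← hd]
    ring
  rw [hscale, lt_inv_mul_iff₀ (mul_pos hs ht), inv_mul_le_iff₀ (mul_pos hs ht)] at key
  exact key

theorem lt_of_orthonormal (h : IsSectionallyPinched R a b) {ι : Type*} {e : ι → E}
    (he : Orthonormal ℝ e) {i j : ι} (hij : i ≠ j) : a < R (e i) (e j) (e i) (e j) :=
  (h _ _ (by simp [he.1 i]) (by simp [he.1 j]) (he.2 hij)).1

theorem abs_add_lt (h : IsSectionallyPinched R a b) (hpair : ∀ x y z w, R x y z w = R z w x y)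
    {e : Fin 4 → E} (he : Orthonormal ℝ e) :
    |R (e 0) (e 1) (e 2) (e 3) + R (e 0) (e 3) (e 2) (e 1)| < b - a := by
  have hinner := orthonormal_iff_ite.mp he
  have bound (u v : E) (hu : ⟪u, u⟫ = 2) (hv : ⟪v, v⟫ = 2) (huv : ⟪u, v⟫ = 0) :=
    h.bounds_of_inner two_pos two_pos hu hv huv
  have hpp := bound (e 0 + e 2) (e 1 + e 3) ?_ ?_ ?_
  have hmm := bound (e 0 - e 2) (e 1 - e 3) ?_ ?_ ?_
  have hpm := bound (e 0 + e 2) (e 1 - e 3) ?_ ?_ ?_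
  have hmp := bound (e 0 - e 2) (e 1 + e 3) ?_ ?_ ?_
  · have := polarization_identity hpair (e 0) (e 1) (e 2) (e 3)
    rw [abs_lt]
    constructor <;> linarith [hpp.1, hpp.2, hmm.1, hmm.2, hpm.1, hpm.2, hmp.1, hmp.2]
  all_goals
    simp only [inner_add_left, inner_add_right, inner_sub_left, inner_sub_right, hinner]
    norm_num [Fin.ext_iff]

end IsSectionallyPinched

namespace IsAlgebraicCurvatureTensor

/-- Berger's estimate, one-sided. -/
theorem lt_of_isSectionallyPinched (hR : IsAlgebraicCurvatureTensor R)
    (h : IsSectionallyPinched R a b) {e : Fin 4 → E} (he : Orthonormal ℝ e) :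
    R (e 0) (e 1) (e 2) (e 3) < 2 / 3 * (b - a) := by
  have h₁ := abs_lt.mp (h.abs_add_lt hR.pair_symm he)
  have h₂ := abs_lt.mp (h.abs_add_lt hR.pair_symm (he.comp _ (Equiv.swap 2 3).injective))
  simp only [Function.comp_apply, Equiv.swap_apply_left, Equiv.swap_apply_right,
    Equiv.swap_apply_of_ne_of_ne (by decide : (0 : Fin 4) ≠ 2) (by decide : (0 : Fin 4) ≠ 3),
    Equiv.swap_apply_of_ne_of_ne (by decide : (1 : Fin 4) ≠ 2) (by decide : (1 : Fin 4) ≠ 3)] at h₂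
  linarith [hR.bianchi (e 0) (e 1) (e 2) (e 3), hR.antisymm_right (e 0) (e 1) (e 2) (e 3),
    hR.pair_symm (e 0) (e 3) (e 2) (e 1), hR.antisymm (e 2) (e 1) (e 0) (e 3),
    hR.pair_symm (e 0) (e 2) (e 3) (e 1), hR.antisymm (e 3) (e 1) (e 0) (e 2),
    hR.antisymm_right (e 1) (e 3) (e 0) (e 2), hR.pair_symm (e 1) (e 3) (e 2) (e 0)]

theorem isotropicCurvature_pos (hR : IsAlgebraicCurvatureTensor R)
    (h : IsSectionallyPinched R a b) (hab : b ≤ 4 * a) {e : Fin 4 → E} (he : Orthonormal ℝ e) :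
    0 < isotropicCurvature R e := by
  have hberger := hR.lt_of_isSectionallyPinched h he
  unfold isotropicCurvature
  linarith [h.lt_of_orthonormal he (by decide : (0 : Fin 4) ≠ 2),
    h.lt_of_orthonormal he (by decide : (0 : Fin 4) ≠ 3),
    h.lt_of_orthonormal he (by decide : (1 : Fin 4) ≠ 2),
    h.lt_of_orthonormal he (by decide : (1 : Fin 4) ≠ 3)]

end IsAlgebraicCurvatureTensor

end CurvatureTensor

theorem stmt_1 (n : ℕ)
    (R : EuclideanSpace ℝ (Fin n) →ₗ[ℝ] EuclideanSpace ℝ (Fin n) →ₗ[ℝ]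
      EuclideanSpace ℝ (Fin n) →ₗ[ℝ] EuclideanSpace ℝ (Fin n) →ₗ[ℝ] ℝ)
    (hanti : ∀ x y z w, R x y z w = - R y x z w)
    (hpair : ∀ x y z w, R x y z w = R z w x y)
    (hbianchi : ∀ x y z w, R x y z w + R y z x w + R z x y w = 0)
    (hsec : ∀ x y : EuclideanSpace ℝ (Fin n),
      (inner ℝ x x : ℝ) = 1 → (inner ℝ y y : ℝ) = 1 → (inner ℝ x y : ℝ) = 0 →
      1 < R x y x y ∧ R x y x y ≤ 4) :
    ∀ e : Fin 4 → EuclideanSpace ℝ (Fin n), Orthonormal ℝ e →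
      0 < R (e 0) (e 2) (e 0) (e 2) + R (e 0) (e 3) (e 0) (e 3)
        + R (e 1) (e 2) (e 1) (e 2) + R (e 1) (e 3) (e 1) (e 3)
        - 2 * R (e 0) (e 1) (e 2) (e 3) := fun _ he =>
  IsAlgebraicCurvatureTensor.isotropicCurvature_pos ⟨hanti, hpair, hbianchi⟩ hsec
    (by norm_num) he
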